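/- Let n1, n2 be positive integers, let J : ℝ^{n1×n2} × ℝ^{n1} → ℝ be lower semicontinuous and bounded on bounded sets, let μ2^d ∈ ℝ^{n2} with μ2^d ≥ 0 componentwise, and let c_d ∈ ℝ^{n1×n2}. Let (γ_k)_{k∈ℕ} be positive reals with γ_k → 0, and for each k let (π_k, μ_{1,k}, c_k) minimize (π, μ1, c) ↦ J(π, μ1) + (1/(2γ_k))‖c − c_d‖_F² over F_{γ_k}(μ2^d). Then there exist a subsequence and (π̄, μ̄1) such that along this subsequence (π_k, μ_{1,k}, c_k) → (π̄, μ̄1, c_d), and (π̄, μ̄1) is an optimal solution of the non-regularized bilevel Hitchcock problem: (π̄, μ̄1) ∈ F(μ2^d, c_d) and J(π̄, μ̄1) ≤ J(π, μ1) for all (π, μ1) ∈ F(μ2^d, c_d). -/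
import Mathlib


open Filter Topology

noncomputable section

/-- The transport polytope Π(μ1, μ2). -/
def transportPolytope {n1 n2 : ℕ} (μ1 : Fin n1 → ℝ) (μ2 : Fin n2 → ℝ) :
    Set (Fin n1 → Fin n2 → ℝ) :=
  {π | (∀ i j, 0 ≤ π i j) ∧ (∀ i, (∑ j, π i j) = μ1 i) ∧ (∀ j, (∑ i, π i j) = μ2 j)}

/-- The Frobenius inner product ⟨c, π⟩_F.  Note that `frob π π = ‖π‖_F²`. -/
def frob {n1 n2 : ℕ} (c π : Fin n1 → Fin n2 → ℝ) : ℝ := ∑ i, ∑ j, c i j * π i j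

/-- π solves the Hitchcock problem (H) w.r.t. μ1, μ2, c. -/
def SolvesH {n1 n2 : ℕ} (μ1 : Fin n1 → ℝ) (μ2 : Fin n2 → ℝ)
    (c π : Fin n1 → Fin n2 → ℝ) : Prop :=
  π ∈ transportPolytope μ1 μ2 ∧
    ∀ θ ∈ transportPolytope μ1 μ2, frob c π ≤ frob c θ

/-- π solves the regularized Hitchcock problem (H_γ) w.r.t. μ1, μ2, c. -/
def SolvesHreg {n1 n2 : ℕ} (γ : ℝ) (μ1 : Fin n1 → ℝ) (μ2 : Fin n2 → ℝ)
    (c π : Fin n1 → Fin n2 → ℝ) : Prop :=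
  π ∈ transportPolytope μ1 μ2 ∧
    ∀ θ ∈ transportPolytope μ1 μ2,
      frob c π + γ / 2 * frob π π ≤ frob c θ + γ / 2 * frob θ θ

/-- The bilevel feasible set F(μ2, c). -/
def bilevelFeas {n1 n2 : ℕ} (μ2 : Fin n2 → ℝ) (c : Fin n1 → Fin n2 → ℝ) :
    Set ((Fin n1 → Fin n2 → ℝ) × (Fin n1 → ℝ)) :=
  {p | (∀ i, 0 ≤ p.2 i) ∧ ((∑ i, p.2 i) = ∑ j, μ2 j) ∧ SolvesH p.2 μ2 c p.1}

/-- The regularized bilevel feasible set F_γ(μ2^d). -/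
def regBilevelFeas {n1 n2 : ℕ} (γ : ℝ) (μ2d : Fin n2 → ℝ) :
    Set ((Fin n1 → Fin n2 → ℝ) × (Fin n1 → ℝ) × (Fin n1 → Fin n2 → ℝ)) :=
  {p | (∀ i, 0 ≤ p.2.1 i) ∧ ((∑ i, p.2.1 i) = ∑ j, μ2d j) ∧
    SolvesHreg γ p.2.1 μ2d p.2.2 p.1}

/-- J is bounded on bounded sets. -/
def BddOnBddSets {n1 n2 : ℕ} (J : (Fin n1 → Fin n2 → ℝ) × (Fin n1 → ℝ) → ℝ) : Prop :=
  ∀ M : ℝ, 0 < M → ∃ B : ℝ, ∀ p : (Fin n1 → Fin n2 → ℝ) × (Fin n1 → ℝ), ‖p‖ ≤ M → J p ≤ B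

/-! ### Auxiliary lemmas about `frob` -/

lemma frob_self_nonneg {n1 n2 : ℕ} (π : Fin n1 → Fin n2 → ℝ) : 0 ≤ frob π π :=
  Finset.sum_nonneg fun _ _ => Finset.sum_nonneg fun _ _ => mul_self_nonneg _

lemma frob_sub_left {n1 n2 : ℕ} (a b c : Fin n1 → Fin n2 → ℝ) :
    frob (a - b) c = frob a c - frob b c := by
  simp [frob, sub_mul, Finset.sum_sub_distrib]

lemma frob_sub_right {n1 n2 : ℕ} (a b c : Fin n1 → Fin n2 → ℝ) :
    frob a (b - c) = frob a b - frob a c := by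
  simp [frob, mul_sub, Finset.sum_sub_distrib]

lemma frob_smul_left {n1 n2 : ℕ} (γ : ℝ) (a b : Fin n1 → Fin n2 → ℝ) :
    frob (γ • a) b = γ * frob a b := by
  simp [frob, Finset.mul_sum, mul_assoc]

lemma frob_comm {n1 n2 : ℕ} (a b : Fin n1 → Fin n2 → ℝ) : frob a b = frob b a := by
  simp [frob, mul_comm]

lemma frob_smul_right {n1 n2 : ℕ} (γ : ℝ) (a b : Fin n1 → Fin n2 → ℝ) :
    frob a (γ • b) = γ * frob a b := by
  rw [frob_comm, frob_smul_left, frob_comm]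

lemma frob_neg_neg {n1 n2 : ℕ} (a b : Fin n1 → Fin n2 → ℝ) : frob (-a) (-b) = frob a b := by
  simp [frob]

/-- If `π` solves the Hitchcock problem w.r.t. cost `cd`, then it solves the `γ`-regularized
problem w.r.t. the "tilted" cost `cd - γ • π`. -/
lemma solvesHreg_tilt {n1 n2 : ℕ} {μ1 : Fin n1 → ℝ} {μ2 : Fin n2 → ℝ}
    {cd π : Fin n1 → Fin n2 → ℝ} {γ : ℝ} (hγ : 0 ≤ γ) (h : SolvesH μ1 μ2 cd π) :
    SolvesHreg γ μ1 μ2 (cd - γ • π) π := by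
  refine ⟨h.1, fun θ hθ => ?_⟩
  have hopt := h.2 θ hθ
  have hsq := frob_self_nonneg (θ - π)
  have hexp : frob (θ - π) (θ - π) = frob θ θ - 2 * frob π θ + frob π π := by
    rw [frob_sub_left, frob_sub_right, frob_sub_right, frob_comm θ π]; ring
  have e1 : frob (cd - γ • π) π = frob cd π - γ * frob π π := by
    rw [frob_sub_left, frob_smul_left]
  have e2 : frob (cd - γ • π) θ = frob cd θ - γ * frob π θ := by
    rw [frob_sub_left, frob_smul_left]
  rw [e1, e2]
  nlinarith

lemma penalty_tilt {n1 n2 : ℕ} (γ : ℝ) (cd π : Fin n1 → Fin n2 → ℝ) :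
    frob ((cd - γ • π) - cd) ((cd - γ • π) - cd) = γ * (γ * frob π π) := by
  have h : (cd - γ • π) - cd = -(γ • π) := sub_sub_cancel_left _ _
  rw [h, frob_neg_neg, frob_smul_left, frob_smul_right]

lemma tendsto_frob {n1 n2 : ℕ} {x y : ℕ → (Fin n1 → Fin n2 → ℝ)} {a b : Fin n1 → Fin n2 → ℝ}
    (hx : Tendsto x atTop (𝓝 a)) (hy : Tendsto y atTop (𝓝 b)) :
    Tendsto (fun k => frob (x k) (y k)) atTop (𝓝 (frob a b)) := by
  simp only [frob]
  refine tendsto_finset_sum _ fun i _ => tendsto_finset_sum _ fun j _ => Tendsto.mul ?_ ?_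
  · exact tendsto_pi_nhds.1 (tendsto_pi_nhds.1 hx i) j
  · exact tendsto_pi_nhds.1 (tendsto_pi_nhds.1 hy i) j

/-! ### Auxiliary lemmas about the transport polytope -/

lemma continuous_apply2 {n1 n2 : ℕ} (i : Fin n1) (j : Fin n2) :
    Continuous (fun π : Fin n1 → Fin n2 → ℝ => π i j) :=
  (continuous_apply j).comp (continuous_apply i)

lemma isClosed_transportPolytope {n1 n2 : ℕ} (μ1 : Fin n1 → ℝ) (μ2 : Fin n2 → ℝ) :
    IsClosed (transportPolytope μ1 μ2) := by
  have h1 : IsClosed {π : Fin n1 → Fin n2 → ℝ | ∀ i j, 0 ≤ π i j} := by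
    have : {π : Fin n1 → Fin n2 → ℝ | ∀ i j, 0 ≤ π i j} =
        ⋂ i, ⋂ j, {π : Fin n1 → Fin n2 → ℝ | 0 ≤ π i j} := by
      ext π; simp
    rw [this]
    exact isClosed_iInter fun i => isClosed_iInter fun j =>
      isClosed_le continuous_const (continuous_apply2 i j)
  have h2 : IsClosed {π : Fin n1 → Fin n2 → ℝ | ∀ i, (∑ j, π i j) = μ1 i} := by
    have : {π : Fin n1 → Fin n2 → ℝ | ∀ i, (∑ j, π i j) = μ1 i} =
        ⋂ i, {π : Fin n1 → Fin n2 → ℝ | (∑ j, π i j) = μ1 i} := by ext π; simp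
    rw [this]
    exact isClosed_iInter fun i =>
      isClosed_eq (continuous_finset_sum _ fun j _ => continuous_apply2 i j) continuous_const
  have h3 : IsClosed {π : Fin n1 → Fin n2 → ℝ | ∀ j, (∑ i, π i j) = μ2 j} := by
    have : {π : Fin n1 → Fin n2 → ℝ | ∀ j, (∑ i, π i j) = μ2 j} =
        ⋂ j, {π : Fin n1 → Fin n2 → ℝ | (∑ i, π i j) = μ2 j} := by ext π; simp
    rw [this]
    exact isClosed_iInter fun j =>
      isClosed_eq (continuous_finset_sum _ fun i _ => continuous_apply2 i j) continuous_const
  exact (h1.inter (h2.inter h3))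

lemma entry_le_of_mem {n1 n2 : ℕ} {μ1 : Fin n1 → ℝ} {μ2 : Fin n2 → ℝ}
    {π : Fin n1 → Fin n2 → ℝ} (hπ : π ∈ transportPolytope μ1 μ2) (i : Fin n1) (j : Fin n2) :
    π i j ≤ μ2 j := by
  obtain ⟨hpos, -, hcol⟩ := hπ
  rw [← hcol j]
  exact Finset.single_le_sum (fun i' _ => hpos i' j) (Finset.mem_univ i)

lemma norm_le_of_mem {n1 n2 : ℕ} {μ1 : Fin n1 → ℝ} {μ2 : Fin n2 → ℝ}
    (hμ2 : ∀ j, 0 ≤ μ2 j)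
    {π : Fin n1 → Fin n2 → ℝ} (hπ : π ∈ transportPolytope μ1 μ2) :
    ‖π‖ ≤ ∑ j, μ2 j := by
  have hS : 0 ≤ ∑ j, μ2 j := Finset.sum_nonneg fun j _ => hμ2 j
  rw [pi_norm_le_iff_of_nonneg hS]
  intro i
  rw [pi_norm_le_iff_of_nonneg hS]
  intro j
  rw [Real.norm_eq_abs, abs_le]
  constructor
  · linarith [hπ.1 i j]
  · exact le_trans (entry_le_of_mem hπ i j)
      (Finset.single_le_sum (fun j' _ => hμ2 j') (Finset.mem_univ j))

lemma isCompact_transportPolytope {n1 n2 : ℕ} (μ1 : Fin n1 → ℝ) {μ2 : Fin n2 → ℝ}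
    (hμ2 : ∀ j, 0 ≤ μ2 j) : IsCompact (transportPolytope μ1 μ2) := by
  have : transportPolytope μ1 μ2 ⊆ Metric.closedBall 0 (∑ j, μ2 j) := by
    intro π hπ
    rw [Metric.mem_closedBall, dist_zero_right]
    exact norm_le_of_mem hμ2 hπ
  exact (isCompact_closedBall _ _).of_isClosed_subset (isClosed_transportPolytope μ1 μ2) this

lemma prod_coupling_mem {n1 n2 : ℕ} {μ1 : Fin n1 → ℝ} {μ2 : Fin n2 → ℝ}
    (hμ1 : ∀ i, 0 ≤ μ1 i) (hμ2 : ∀ j, 0 ≤ μ2 j) (hsum : (∑ i, μ1 i) = ∑ j, μ2 j) :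
    (fun i j => μ1 i * μ2 j / (∑ j, μ2 j)) ∈ transportPolytope μ1 μ2 := by
  have hS : 0 ≤ ∑ j, μ2 j := Finset.sum_nonneg fun j _ => hμ2 j
  refine ⟨fun i j => div_nonneg (mul_nonneg (hμ1 i) (hμ2 j)) hS, ?_, ?_⟩
  · intro i
    rw [← Finset.sum_div, ← Finset.mul_sum]
    by_cases h : (∑ j, μ2 j) = 0
    · have : μ1 i = 0 := by
        have := (Finset.sum_eq_zero_iff_of_nonneg (fun i _ => hμ1 i)).1 (hsum.trans h)
        exact this i (Finset.mem_univ i)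
      simp [h, this]
    · field_simp
  · intro j
    rw [← Finset.sum_div, ← Finset.sum_mul, hsum]
    by_cases h : (∑ j, μ2 j) = 0
    · have : μ2 j = 0 := (Finset.sum_eq_zero_iff_of_nonneg (fun j _ => hμ2 j)).1 h j
        (Finset.mem_univ j)
      simp [h, this]
    · field_simp

lemma continuous_frob' {n1 n2 : ℕ} :
    Continuous (fun p : (Fin n1 → Fin n2 → ℝ) × (Fin n1 → Fin n2 → ℝ) => frob p.1 p.2) := by
  refine continuous_finset_sum _ fun i _ => continuous_finset_sum _ fun j _ => Continuous.mul ?_ ?_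
  · exact (continuous_apply j).comp ((continuous_apply i).comp continuous_fst)
  · exact (continuous_apply j).comp ((continuous_apply i).comp continuous_snd)

lemma exists_H_solution {n1 n2 : ℕ} {μ1 : Fin n1 → ℝ} {μ2 : Fin n2 → ℝ}
    (hμ1 : ∀ i, 0 ≤ μ1 i) (hμ2 : ∀ j, 0 ≤ μ2 j) (hsum : (∑ i, μ1 i) = ∑ j, μ2 j)
    (c : Fin n1 → Fin n2 → ℝ) :
    ∃ π ∈ transportPolytope μ1 μ2, ∀ θ ∈ transportPolytope μ1 μ2, frob c π ≤ frob c θ := by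
  obtain ⟨π, hπ, hmin⟩ := (isCompact_transportPolytope μ1 hμ2).exists_isMinOn
    ⟨_, prod_coupling_mem hμ1 hμ2 hsum⟩
    ((continuous_frob'.comp (Continuous.prodMk_right c)).continuousOn)
  exact ⟨π, hπ, fun θ hθ => hmin hθ⟩

/-- A lower semicontinuous function is bounded below on a compact set. -/
lemma lsc_bddBelow_on_compact {X : Type*} [TopologicalSpace X] {J : X → ℝ}
    (hJ : LowerSemicontinuous J) {K : Set X} (hK : IsCompact K) :
    ∃ L : ℝ, ∀ x ∈ K, L ≤ J x := by
  obtain ⟨t, -, ht⟩ := hK.elim_nhds_subcover (fun x => {x' | J x - 1 < J x'})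
    (fun x _ => hJ x (J x - 1) (by linarith))
  by_cases hne : t.Nonempty
  · refine ⟨t.inf' hne (fun x => J x - 1), fun x hx => ?_⟩
    obtain ⟨x₀, hx₀t, hx₀⟩ := Set.mem_iUnion₂.1 (ht hx)
    exact le_trans (Finset.inf'_le _ hx₀t) (le_of_lt hx₀)
  · rw [Finset.not_nonempty_iff_eq_empty] at hne
    subst hne
    exact ⟨0, fun x hx => absurd (ht hx) (by simp)⟩

/-- Given a coupling `θ` with marginals `(μb, μ2)`, and a nonnegative vector `μ` with the same
total mass as `μ2`, there is a coupling with marginals `(μ, μ2)` which is entrywise within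
`2 * ∑ |μ - μb|` of `θ`. -/
lemma approx_coupling {n1 n2 : ℕ} {μ μb : Fin n1 → ℝ} {μ2 : Fin n2 → ℝ}
    {θ : Fin n1 → Fin n2 → ℝ}
    (hμ : ∀ i, 0 ≤ μ i) (hsum : (∑ i, μ i) = ∑ j, μ2 j)
    (hθ : θ ∈ transportPolytope μb μ2) :
    ∃ θ', θ' ∈ transportPolytope μ μ2 ∧
      ∀ i j, |θ' i j - θ i j| ≤ 2 * ∑ i', |μ i' - μb i'| := by
  obtain ⟨hθpos, hθrow, hθcol⟩ := hθ
  set a : Fin n1 → ℝ := fun i => min (μ i) (μb i) with ha_def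
  set r : ℝ := ∑ i, (μ i - a i) with hr_def
  set g : Fin n2 → ℝ := fun j => μ2 j - ∑ m, θ m j * (a m / μb m) with hg_def
  have hμb : ∀ i, 0 ≤ μb i := fun i => (hθrow i) ▸ Finset.sum_nonneg fun j _ => hθpos i j
  have hθ0 : ∀ i j, μb i = 0 → θ i j = 0 := by
    intro i j h
    have h1 : θ i j ≤ μb i := (hθrow i) ▸
      Finset.single_le_sum (fun j' _ => hθpos i j') (Finset.mem_univ j)
    have := hθpos i j; linarith
  have ha_nonneg : ∀ i, 0 ≤ a i := fun i => le_min (hμ i) (hμb i)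
  have ha_le_μ : ∀ i, a i ≤ μ i := fun i => min_le_left _ _
  have ha_le_μb : ∀ i, a i ≤ μb i := fun i => min_le_right _ _
  have ha_zero : ∀ i, μb i = 0 → a i = 0 := by
    intro i h
    have := ha_nonneg i; have := ha_le_μb i; linarith
  have h_mul_a : ∀ i, μb i * (a i / μb i) = a i := by
    intro i
    by_cases h : μb i = 0
    · simp [h, ha_zero i h]
    · field_simp
  have h_div_le_one : ∀ i, a i / μb i ≤ 1 := by
    intro i
    by_cases h : μb i = 0
    · simp [h]
    · exact div_le_one_of_le₀ (ha_le_μb i) (hμb i)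
  have h_div_nonneg : ∀ i, 0 ≤ a i / μb i := fun i => div_nonneg (ha_nonneg i) (hμb i)
  have h_term_le : ∀ m j, θ m j * (a m / μb m) ≤ θ m j := fun m j =>
    mul_le_of_le_one_right (hθpos m j) (h_div_le_one m)
  have h_term_nonneg : ∀ m j, 0 ≤ θ m j * (a m / μb m) := fun m j =>
    mul_nonneg (hθpos m j) (h_div_nonneg m)
  have hr_nonneg : 0 ≤ r :=
    Finset.sum_nonneg fun i _ => by linarith [ha_le_μ i]
  have hg_nonneg : ∀ j, 0 ≤ g j := by
    intro j
    have : (∑ m, θ m j * (a m / μb m)) ≤ ∑ m, θ m j :=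
      Finset.sum_le_sum fun m _ => h_term_le m j
    have h2 : (∑ m, θ m j) = μ2 j := hθcol j
    simp only [hg_def]; linarith
  have hrow_mul : ∀ i, (∑ j, θ i j * (a i / μb i)) = a i := by
    intro i
    rw [← Finset.sum_mul, hθrow i, h_mul_a i]
  have hsum_g : (∑ j, g j) = r := by
    simp only [hg_def, hr_def]
    rw [Finset.sum_sub_distrib, Finset.sum_comm]
    have : ∀ m, (∑ j, θ m j * (a m / μb m)) = a m := hrow_mul
    rw [Finset.sum_congr rfl fun m _ => this m, Finset.sum_sub_distrib, hsum]
  have hg_le_r : ∀ j, g j ≤ r := by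
    intro j
    rw [← hsum_g]
    exact Finset.single_le_sum (fun j' _ => hg_nonneg j') (Finset.mem_univ j)
  have hgr_le_one : ∀ j, g j / r ≤ 1 := by
    intro j
    by_cases h : r = 0
    · simp [h]
    · exact div_le_one_of_le₀ (hg_le_r j) hr_nonneg
  have hgr_nonneg : ∀ j, 0 ≤ g j / r := fun j => div_nonneg (hg_nonneg j) hr_nonneg
  have hr_zero : r = 0 → ∀ i, μ i - a i = 0 := by
    intro h i
    have := (Finset.sum_eq_zero_iff_of_nonneg
      (fun i' (_ : i' ∈ Finset.univ) => by linarith [ha_le_μ i'] :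
        ∀ i' ∈ Finset.univ, 0 ≤ μ i' - a i')).1 h.symm.symm
    exact this i (Finset.mem_univ i)
  refine ⟨fun i j => θ i j * (a i / μb i) + (μ i - a i) * (g j / r), ⟨?_, ?_, ?_⟩, ?_⟩
  · intro i j
    exact add_nonneg (h_term_nonneg i j)
      (mul_nonneg (by linarith [ha_le_μ i]) (hgr_nonneg j))
  · intro i
    rw [Finset.sum_add_distrib, hrow_mul i, ← Finset.mul_sum, ← Finset.sum_div, hsum_g]
    by_cases h : r = 0
    · have := hr_zero h i
      simp [h]; linarith
    · rw [div_self h, mul_one]; ring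
  · intro j
    rw [Finset.sum_add_distrib, ← Finset.sum_mul]
    have h1 : (∑ i, θ i j * (a i / μb i)) = μ2 j - g j := by simp [hg_def]
    have h2 : (∑ i, (μ i - a i)) = r := rfl
    rw [h1, h2]
    by_cases h : r = 0
    · have hg0 : g j = 0 := le_antisymm (h ▸ hg_le_r j) (hg_nonneg j)
      simp [h, hg0]
    · rw [mul_div_assoc'] ; rw [mul_comm r (g j), mul_div_assoc, div_self h, mul_one]; ring
  · intro i j
    have key : θ i j * (a i / μb i) + (μ i - a i) * (g j / r) - θ i j =
        (θ i j * (a i / μb i) - θ i j) + (μ i - a i) * (g j / r) := by ring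
    rw [key]
    have hy : (μ i - a i) * (g j / r) ≤ μ i - a i :=
      mul_le_of_le_one_right (by linarith [ha_le_μ i]) (hgr_le_one j)
    have hy0 : 0 ≤ (μ i - a i) * (g j / r) :=
      mul_nonneg (by linarith [ha_le_μ i]) (hgr_nonneg j)
    have hx : |θ i j * (a i / μb i) - θ i j| ≤ μb i - a i := by
      by_cases h : μb i = 0
      · simp [hθ0 i j h, ha_zero i h, h]
      · have hθle : θ i j ≤ μb i := (hθrow i) ▸
          Finset.single_le_sum (fun j' _ => hθpos i j') (Finset.mem_univ j)
        have h1 : θ i j * (1 - a i / μb i) ≤ μb i * (1 - a i / μb i) :=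
          mul_le_mul_of_nonneg_right hθle (by linarith [h_div_le_one i])
        have h2 : μb i * (1 - a i / μb i) = μb i - a i := by
          rw [mul_one_sub, h_mul_a]
        have h3 : θ i j * (a i / μb i) - θ i j ≤ 0 := by
          nlinarith [h_div_le_one i, hθpos i j]
        rw [abs_of_nonpos h3]
        nlinarith
    have habs : ∀ i', |μ i' - μb i'| ≤ ∑ i'', |μ i'' - μb i''| := fun i' =>
      Finset.single_le_sum (f := fun i'' => |μ i'' - μb i''|)
        (fun i'' _ => abs_nonneg _) (Finset.mem_univ i')
    have hai : a i = min (μ i) (μb i) := rfl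
    have hbd1 : μb i - a i ≤ |μ i - μb i| := by
      rcases le_total (μ i) (μb i) with h | h
      · rw [hai, min_eq_left h, abs_sub_comm, abs_of_nonneg (by linarith)]
      · rw [hai, min_eq_right h]; have := abs_nonneg (μ i - μb i); linarith
    have hbd2 : μ i - a i ≤ |μ i - μb i| := by
      rcases le_total (μ i) (μb i) with h | h
      · rw [hai, min_eq_left h]; have := abs_nonneg (μ i - μb i); linarith
      · rw [hai, min_eq_right h, abs_of_nonneg (by linarith)]
    calc |(θ i j * (a i / μb i) - θ i j) + (μ i - a i) * (g j / r)|
        ≤ |θ i j * (a i / μb i) - θ i j| + |(μ i - a i) * (g j / r)| := abs_add_le _ _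
      _ ≤ (μb i - a i) + (μ i - a i) := by
          rw [abs_of_nonneg hy0]; exact add_le_add hx hy
      _ ≤ |μ i - μb i| + |μ i - μb i| := add_le_add hbd1 hbd2
      _ ≤ 2 * ∑ i', |μ i' - μb i'| := by linarith [habs i]

/-- A subsequence of the regularized bilevel solutions converges to an optimal solution of
the non-regularized bilevel Hitchcock problem. -/
theorem regularized_solutions_converge_to_bilevel_solution
    (n1 n2 : ℕ) (hn1 : 0 < n1) (hn2 : 0 < n2)
    (J : (Fin n1 → Fin n2 → ℝ) × (Fin n1 → ℝ) → ℝ)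
    (hJ : LowerSemicontinuous J) (hJbdd : BddOnBddSets J)
    (μ2d : Fin n2 → ℝ) (hμ2d : ∀ j, 0 ≤ μ2d j) (cd : Fin n1 → Fin n2 → ℝ)
    (γs : ℕ → ℝ) (hγpos : ∀ k, 0 < γs k) (hγ0 : Tendsto γs atTop (𝓝 0))
    (πs : ℕ → Fin n1 → Fin n2 → ℝ) (μs : ℕ → Fin n1 → ℝ) (cs : ℕ → Fin n1 → Fin n2 → ℝ)
    (hfeas : ∀ k, (πs k, μs k, cs k) ∈ regBilevelFeas (γs k) μ2d)
    (hmin : ∀ k, ∀ q ∈ regBilevelFeas (n1 := n1) (γs k) μ2d,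
      J (πs k, μs k) + 1 / (2 * γs k) * frob (cs k - cd) (cs k - cd) ≤
        J (q.1, q.2.1) + 1 / (2 * γs k) * frob (q.2.2 - cd) (q.2.2 - cd)) :
    ∃ (φ : ℕ → ℕ) (πb : Fin n1 → Fin n2 → ℝ) (μb : Fin n1 → ℝ),
      StrictMono φ ∧
      Tendsto (fun k => (πs (φ k), μs (φ k), cs (φ k))) atTop (𝓝 (πb, μb, cd)) ∧
      (πb, μb) ∈ bilevelFeas μ2d cd ∧
      ∀ q ∈ bilevelFeas (n1 := n1) μ2d cd, J (πb, μb) ≤ J q := by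
  classical
  have hS0 : 0 ≤ ∑ j, μ2d j := Finset.sum_nonneg fun j _ => hμ2d j
  -- basic facts from feasibility
  have hμk_nonneg : ∀ k i, 0 ≤ μs k i := fun k i => (hfeas k).1 i
  have hμk_sum : ∀ k, (∑ i, μs k i) = ∑ j, μ2d j := fun k => (hfeas k).2.1
  have hπk_mem : ∀ k, πs k ∈ transportPolytope (μs k) μ2d := fun k => (hfeas k).2.2.1
  have hπk_norm : ∀ k, ‖πs k‖ ≤ ∑ j, μ2d j := fun k => norm_le_of_mem hμ2d (hπk_mem k)
  have hμk_norm : ∀ k, ‖μs k‖ ≤ ∑ j, μ2d j := by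
    intro k
    rw [pi_norm_le_iff_of_nonneg hS0]
    intro i
    rw [Real.norm_eq_abs, abs_of_nonneg (hμk_nonneg k i), ← hμk_sum k]
    exact Finset.single_le_sum (fun i' _ => hμk_nonneg k i') (Finset.mem_univ i)
  have hball : ∀ k, ((πs k, μs k) : (Fin n1 → Fin n2 → ℝ) × (Fin n1 → ℝ)) ∈
      Metric.closedBall 0 (∑ j, μ2d j) := by
    intro k
    rw [Metric.mem_closedBall, dist_zero_right, Prod.norm_def]
    exact max_le (hπk_norm k) (hμk_norm k)
  -- a reference feasible point for the unregularized bilevel problem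
  have hμ0_nonneg : ∀ i : Fin n1, 0 ≤ (fun _ : Fin n1 => (∑ j, μ2d j) / n1) i :=
    fun i => div_nonneg hS0 (Nat.cast_nonneg n1)
  have hn1' : (n1 : ℝ) ≠ 0 := Nat.cast_ne_zero.2 hn1.ne'
  have hμ0_sum : (∑ i : Fin n1, (fun _ : Fin n1 => (∑ j, μ2d j) / n1) i) = ∑ j, μ2d j := by
    simp only [Finset.sum_const, Finset.card_univ, Fintype.card_fin, nsmul_eq_mul]
    rw [mul_comm, div_mul_cancel₀ _ hn1']
  obtain ⟨π0, hπ0mem, hπ0opt⟩ := exists_H_solution hμ0_nonneg hμ2d hμ0_sum cd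
  set μ0 : Fin n1 → ℝ := fun _ => (∑ j, μ2d j) / n1 with hμ0_def
  -- the key comparison bound via the tilted feasible points
  have hqk : ∀ (π : Fin n1 → Fin n2 → ℝ) (μ1 : Fin n1 → ℝ),
      (∀ i, 0 ≤ μ1 i) → ((∑ i, μ1 i) = ∑ j, μ2d j) → SolvesH μ1 μ2d cd π →
      ∀ k, J (πs k, μs k) + 1 / (2 * γs k) * frob (cs k - cd) (cs k - cd) ≤
        J (π, μ1) + γs k / 2 * frob π π := by
    intro π μ1 h1 h2 h3 k
    have hmem : ((π, μ1, cd - γs k • π) :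
        (Fin n1 → Fin n2 → ℝ) × (Fin n1 → ℝ) × (Fin n1 → Fin n2 → ℝ)) ∈
        regBilevelFeas (γs k) μ2d :=
      ⟨h1, h2, solvesHreg_tilt (hγpos k).le h3⟩
    have h := hmin k _ hmem
    simp only [penalty_tilt] at h
    have hγ := hγpos k
    have heq : 1 / (2 * γs k) * (γs k * (γs k * frob π π)) = γs k / 2 * frob π π := by
      field_simp
    rw [heq] at h
    exact h
  have hcomp := fun k => hqk π0 μ0 hμ0_nonneg hμ0_sum ⟨hπ0mem, hπ0opt⟩ k
  -- lower bound for J on the relevant compact set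
  obtain ⟨L, hL⟩ := lsc_bddBelow_on_compact hJ
    (isCompact_closedBall (0 : (Fin n1 → Fin n2 → ℝ) × (Fin n1 → ℝ)) (∑ j, μ2d j))
  have hJk_lb : ∀ k, L ≤ J (πs k, μs k) := fun k => hL _ (hball k)
  -- the Frobenius penalty tends to zero
  have hFk_nonneg : ∀ k, 0 ≤ frob (cs k - cd) (cs k - cd) := fun k => frob_self_nonneg _
  have hFk_le : ∀ k, frob (cs k - cd) (cs k - cd) ≤
      2 * γs k * (J (π0, μ0) - L) + γs k ^ 2 * frob π0 π0 := by
    intro k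
    have h1 := hcomp k
    have h2 := hJk_lb k
    have hγ := hγpos k
    have hne : (2 * γs k) ≠ 0 := by positivity
    have key : 1 / (2 * γs k) * frob (cs k - cd) (cs k - cd) ≤
        J (π0, μ0) + γs k / 2 * frob π0 π0 - L := by linarith
    calc frob (cs k - cd) (cs k - cd)
        = (2 * γs k) * (1 / (2 * γs k) * frob (cs k - cd) (cs k - cd)) := by
          field_simp
      _ ≤ (2 * γs k) * (J (π0, μ0) + γs k / 2 * frob π0 π0 - L) :=
          mul_le_mul_of_nonneg_left key (by linarith)
      _ = 2 * γs k * (J (π0, μ0) - L) + γs k ^ 2 * frob π0 π0 := by ring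
  have hub : Tendsto (fun k => 2 * γs k * (J (π0, μ0) - L) + γs k ^ 2 * frob π0 π0)
      atTop (𝓝 0) := by
    have h1 := (hγ0.const_mul 2).mul_const (J (π0, μ0) - L)
    have h2 := (hγ0.pow 2).mul_const (frob π0 π0)
    have := h1.add h2
    simpa using this
  have hF0 : Tendsto (fun k => frob (cs k - cd) (cs k - cd)) atTop (𝓝 0) :=
    tendsto_of_tendsto_of_tendsto_of_le_of_le tendsto_const_nhds hub hFk_nonneg hFk_le
  -- convergence of the costs
  have hcs : Tendsto cs atTop (𝓝 cd) := by
    rw [tendsto_pi_nhds]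
    intro i
    rw [tendsto_pi_nhds]
    intro j
    have hsq : ∀ k, (cs k i j - cd i j) ^ 2 ≤ frob (cs k - cd) (cs k - cd) := by
      intro k
      have h1 : (cs k i j - cd i j) * (cs k i j - cd i j) ≤
          ∑ j', (cs k i j' - cd i j') * (cs k i j' - cd i j') :=
        Finset.single_le_sum (f := fun j' => (cs k i j' - cd i j') * (cs k i j' - cd i j'))
          (fun j' _ => mul_self_nonneg _) (Finset.mem_univ j)
      have h2 : (∑ j', (cs k i j' - cd i j') * (cs k i j' - cd i j')) ≤
          ∑ i', ∑ j', (cs k i' j' - cd i' j') * (cs k i' j' - cd i' j') :=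
        Finset.single_le_sum
          (f := fun i' => ∑ j', (cs k i' j' - cd i' j') * (cs k i' j' - cd i' j'))
          (fun i' _ => Finset.sum_nonneg fun j' _ => mul_self_nonneg _) (Finset.mem_univ i)
      have h3 : frob (cs k - cd) (cs k - cd) =
          ∑ i', ∑ j', (cs k i' j' - cd i' j') * (cs k i' j' - cd i' j') := by
        simp [frob]
      rw [sq, h3]
      linarith
    have hsq0 : Tendsto (fun k => (cs k i j - cd i j) ^ 2) atTop (𝓝 0) :=
      tendsto_of_tendsto_of_tendsto_of_le_of_le tendsto_const_nhds hF0
        (fun k => sq_nonneg _) hsq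
    have habs : Tendsto (fun k => |cs k i j - cd i j|) atTop (𝓝 0) := by
      have h := (Real.continuous_sqrt.tendsto 0).comp hsq0
      simpa [Function.comp_def, Real.sqrt_sq_eq_abs] using h
    have hdiff : Tendsto (fun k => cs k i j - cd i j) atTop (𝓝 0) :=
      (tendsto_zero_iff_abs_tendsto_zero _).2 habs
    have := hdiff.add_const (cd i j)
    simpa using this
  -- Bolzano–Weierstrass
  obtain ⟨x, -, φ, hφ, hconv⟩ := (isCompact_closedBall
    (0 : (Fin n1 → Fin n2 → ℝ) × (Fin n1 → ℝ)) (∑ j, μ2d j)).tendsto_subseq hball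
  obtain ⟨πb, μb⟩ := x
  have hπconv : Tendsto (fun k => πs (φ k)) atTop (𝓝 πb) := by
    have := (continuous_fst.tendsto (πb, μb)).comp hconv
    simpa [Function.comp_def] using this
  have hμconv : Tendsto (fun k => μs (φ k)) atTop (𝓝 μb) := by
    have := (continuous_snd.tendsto (πb, μb)).comp hconv
    simpa [Function.comp_def] using this
  have hcconv : Tendsto (fun k => cs (φ k)) atTop (𝓝 cd) := by
    have := hcs.comp hφ.tendsto_atTop
    simpa [Function.comp_def] using this
  have hγφ : Tendsto (fun k => γs (φ k)) atTop (𝓝 0) := by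
    have := hγ0.comp hφ.tendsto_atTop
    simpa [Function.comp_def] using this
  -- componentwise limits
  have hπb_nonneg : ∀ i j, 0 ≤ πb i j := by
    intro i j
    exact ge_of_tendsto' (tendsto_pi_nhds.1 (tendsto_pi_nhds.1 hπconv i) j)
      (fun k => (hπk_mem (φ k)).1 i j)
  have hπb_row : ∀ i, (∑ j, πb i j) = μb i := by
    intro i
    have h1 : Tendsto (fun k => ∑ j, πs (φ k) i j) atTop (𝓝 (∑ j, πb i j)) :=
      tendsto_finset_sum _ fun j _ => tendsto_pi_nhds.1 (tendsto_pi_nhds.1 hπconv i) j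
    have h2 : (fun k => ∑ j, πs (φ k) i j) = fun k => μs (φ k) i :=
      funext fun k => (hπk_mem (φ k)).2.1 i
    rw [h2] at h1
    exact tendsto_nhds_unique h1 (tendsto_pi_nhds.1 hμconv i)
  have hπb_col : ∀ j, (∑ i, πb i j) = μ2d j := by
    intro j
    have h1 : Tendsto (fun k => ∑ i, πs (φ k) i j) atTop (𝓝 (∑ i, πb i j)) :=
      tendsto_finset_sum _ fun i _ => tendsto_pi_nhds.1 (tendsto_pi_nhds.1 hπconv i) j
    have h2 : (fun k => ∑ i, πs (φ k) i j) = fun _ => μ2d j :=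
      funext fun k => (hπk_mem (φ k)).2.2 j
    rw [h2] at h1
    exact tendsto_nhds_unique h1 tendsto_const_nhds
  have hμb_nonneg : ∀ i, 0 ≤ μb i := fun i =>
    ge_of_tendsto' (tendsto_pi_nhds.1 hμconv i) (fun k => hμk_nonneg (φ k) i)
  have hμb_sum : (∑ i, μb i) = ∑ j, μ2d j := by
    have h1 : Tendsto (fun k => ∑ i, μs (φ k) i) atTop (𝓝 (∑ i, μb i)) :=
      tendsto_finset_sum _ fun i _ => tendsto_pi_nhds.1 hμconv i
    have h2 : (fun k => ∑ i, μs (φ k) i) = fun _ => ∑ j, μ2d j :=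
      funext fun k => hμk_sum (φ k)
    rw [h2] at h1
    exact tendsto_nhds_unique h1 tendsto_const_nhds
  have hπb_mem : πb ∈ transportPolytope μb μ2d := ⟨hπb_nonneg, hπb_row, hπb_col⟩
  -- optimality of πb in the Hitchcock problem
  have hπb_opt : ∀ θ ∈ transportPolytope μb μ2d, frob cd πb ≤ frob cd θ := by
    intro θ hθ
    choose θ' hmem herr using fun k =>
      approx_coupling (fun i => hμk_nonneg (φ k) i) (hμk_sum (φ k)) hθ
    have hregs : ∀ k, frob (cs (φ k)) (πs (φ k)) +
        γs (φ k) / 2 * frob (πs (φ k)) (πs (φ k)) ≤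
        frob (cs (φ k)) (θ' k) + γs (φ k) / 2 * frob (θ' k) (θ' k) := fun k =>
      ((hfeas (φ k)).2.2).2 (θ' k) (hmem k)
    have hμdiff : Tendsto (fun k => ∑ i', |μs (φ k) i' - μb i'|) atTop (𝓝 0) := by
      have h1 : ∀ i' : Fin n1, Tendsto (fun k => |μs (φ k) i' - μb i'|) atTop (𝓝 0) := by
        intro i'
        have := ((tendsto_pi_nhds.1 hμconv i').sub_const (μb i')).abs
        simpa using this
      have := tendsto_finset_sum Finset.univ (fun i' (_ : i' ∈ Finset.univ) => h1 i')
      simpa using this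
    have hθ'conv : Tendsto θ' atTop (𝓝 θ) := by
      rw [tendsto_pi_nhds]
      intro i
      rw [tendsto_pi_nhds]
      intro j
      have habs : Tendsto (fun k => |θ' k i j - θ i j|) atTop (𝓝 0) := by
        refine tendsto_of_tendsto_of_tendsto_of_le_of_le tendsto_const_nhds ?_
          (fun k => abs_nonneg _) (fun k => herr k i j)
        simpa using hμdiff.const_mul 2
      have hdiff : Tendsto (fun k => θ' k i j - θ i j) atTop (𝓝 0) :=
        (tendsto_zero_iff_abs_tendsto_zero _).2 habs
      have := hdiff.add_const (θ i j)
      simpa using this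
    have hLHS : Tendsto (fun k => frob (cs (φ k)) (πs (φ k)) +
        γs (φ k) / 2 * frob (πs (φ k)) (πs (φ k))) atTop (𝓝 (frob cd πb)) := by
      have h1 := tendsto_frob hcconv hπconv
      have h2 := (hγφ.div_const 2).mul (tendsto_frob hπconv hπconv)
      have := h1.add h2
      simpa using this
    have hRHS : Tendsto (fun k => frob (cs (φ k)) (θ' k) +
        γs (φ k) / 2 * frob (θ' k) (θ' k)) atTop (𝓝 (frob cd θ)) := by
      have h1 := tendsto_frob hcconv hθ'conv
      have h2 := (hγφ.div_const 2).mul (tendsto_frob hθ'conv hθ'conv)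
      have := h1.add h2
      simpa using this
    exact le_of_tendsto_of_tendsto' hLHS hRHS hregs
  refine ⟨φ, πb, μb, hφ, ?_, ⟨hμb_nonneg, hμb_sum, hπb_mem, hπb_opt⟩, ?_⟩
  · exact hπconv.prodMk_nhds (hμconv.prodMk_nhds hcconv)
  · rintro ⟨π, μ1⟩ ⟨h1, h2, h3⟩
    have hJk : ∀ k, J (πs k, μs k) ≤ J (π, μ1) + γs k / 2 * frob π π := by
      intro k
      have h := hqk π μ1 h1 h2 h3 k
      have hγ := hγpos k
      have hpen : 0 ≤ 1 / (2 * γs k) * frob (cs k - cd) (cs k - cd) :=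
        mul_nonneg (by positivity) (hFk_nonneg k)
      linarith
    by_contra hcon
    push_neg at hcon
    have hlt : (J (π, μ1) + J (πb, μb)) / 2 < J (πb, μb) := by linarith
    have hev1 := hJ (πb, μb) _ hlt
    have h2conv : Tendsto (fun k => ((πs (φ k), μs (φ k)) :
        (Fin n1 → Fin n2 → ℝ) × (Fin n1 → ℝ))) atTop (𝓝 (πb, μb)) :=
      hπconv.prodMk_nhds hμconv
    have hev2 := h2conv.eventually hev1
    have h4 : Tendsto (fun k => γs (φ k) / 2 * frob π π) atTop (𝓝 0) := by
      have := (hγφ.div_const 2).mul_const (frob π π)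
      simpa using this
    have hev3 : ∀ᶠ k in atTop,
        γs (φ k) / 2 * frob π π < (J (πb, μb) - J (π, μ1)) / 2 :=
      h4.eventually_lt_const (by linarith)
    obtain ⟨k, hk1, hk2⟩ := (hev2.and hev3).exists
    have := hJk (φ k)
    linarith
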